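/- The box distance satisfies the triangle inequality: for any three mm-spaces X, Y, Z, □(X,Z) ≤ □(X,Y) + □(Y,Z). -/

import Mathlib

open MeasureTheory Metric EMetric Set Filter Topology ENNReal

open Classical in
noncomputable def disS {X Y : Type*} [PseudoMetricSpace X] [PseudoMetricSpace Y]
    (S : Set (X × Y)) : ℝ≥0∞ :=
  if S = ∅ then ⊤
  else ⨆ p ∈ S, ⨆ q ∈ S, ENNReal.ofReal |dist p.1 q.1 - dist p.2 q.2|

noncomputable def dism {X Y : Type*} [PseudoMetricSpace X] [PseudoMetricSpace Y]
    [MeasurableSpace X] [MeasurableSpace Y] (π : Measure (X × Y)) : ℝ≥0∞ :=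
  ⨅ S ∈ {S : Set (X × Y) | IsClosed S}, max (disS S) (1 - π S)

noncomputable def boxDistC {X Y : Type*} [MetricSpace X] [MetricSpace Y]
    [MeasurableSpace X] [MeasurableSpace Y] (mX : Measure X) (mY : Measure Y) : ℝ≥0∞ :=
  ⨅ π ∈ {π : Measure (X × Y) | π.map Prod.fst = mX ∧ π.map Prod.snd = mY}, dism π

/-! Disintegrating a coupling `π₂` of `(m_Y, m_Z)` over `Y` glues it to a coupling `π₁` of
`(m_X, m_Y)` into a measure on `X × Y × Z`, whose push-forward to `X × Z` couples `(m_X, m_Z)`.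
For closed `S₁ ⊆ X × Y` and `S₂ ⊆ Y × Z`, the closure of the relational composition `S₁ ○ S₂`
has distortion at most `dis S₁ + dis S₂` (triangle inequality through the middle point), and its
complement has mass at most `(1 - π₁ S₁) + (1 - π₂ S₂)`, since a triple outside it misses `S₁` or
`S₂`. If `S₁ ○ S₂` is empty, that mass bound is at least `1`, which always bounds `□`. -/

open SetRel ProbabilityTheory

section Distortion

variable {X Y Z : Type*} [PseudoMetricSpace X] [PseudoMetricSpace Y] [PseudoMetricSpace Z]

lemma disS_le_iff {S : Set (X × Y)} (hS : S.Nonempty) {c : ℝ≥0∞} :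
    disS S ≤ c ↔ ∀ p ∈ S, ∀ q ∈ S, ENNReal.ofReal |dist p.1 q.1 - dist p.2 q.2| ≤ c := by
  simp only [disS, if_neg hS.ne_empty, iSup₂_le_iff]

lemma disS_le_of_mem {S : Set (X × Y)} {p q : X × Y} (hp : p ∈ S) (hq : q ∈ S) :
    ENNReal.ofReal |dist p.1 q.1 - dist p.2 q.2| ≤ disS S :=
  (disS_le_iff ⟨p, hp⟩).1 le_rfl p hp q hq

lemma disS_closure_le (S : Set (X × Y)) : disS (closure S) ≤ disS S := by
  rcases S.eq_empty_or_nonempty with rfl | hS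
  · simp
  have hclosed : IsClosed {pq : (X × Y) × (X × Y) |
      ENNReal.ofReal |dist pq.1.1 pq.2.1 - dist pq.1.2 pq.2.2| ≤ disS S} :=
    isClosed_le (ENNReal.continuous_ofReal.comp (by fun_prop)) continuous_const
  refine (disS_le_iff hS.closure).2 fun p hp q hq => ?_
  have hpq : (p, q) ∈ closure (S ×ˢ S) := by rw [closure_prod_eq]; exact ⟨hp, hq⟩
  exact hclosed.closure_subset_iff.2 (fun pq h => disS_le_of_mem h.1 h.2) hpq

lemma disS_comp_le {S₁ : Set (X × Y)} {S₂ : Set (Y × Z)} (hS : (S₁ ○ S₂).Nonempty) :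
    disS (S₁ ○ S₂) ≤ disS S₁ + disS S₂ := by
  refine (disS_le_iff hS).2 ?_
  rintro ⟨x, z⟩ ⟨y, hxy, hyz⟩ ⟨x', z'⟩ ⟨y', hxy', hyz'⟩
  calc ENNReal.ofReal |dist x x' - dist z z'|
      ≤ ENNReal.ofReal (|dist x x' - dist y y'| + |dist y y' - dist z z'|) :=
        ENNReal.ofReal_le_ofReal (abs_sub_le _ _ _)
    _ ≤ ENNReal.ofReal |dist x x' - dist y y'| + ENNReal.ofReal |dist y y' - dist z z'| :=
        ENNReal.ofReal_add_le
    _ ≤ disS S₁ + disS S₂ := add_le_add (disS_le_of_mem hxy hxy') (disS_le_of_mem hyz hyz')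

lemma dism_le_one [Nonempty X] [Nonempty Y] [MeasurableSpace X] [MeasurableSpace Y]
    (π : Measure (X × Y)) : dism π ≤ 1 := by
  obtain ⟨p⟩ : Nonempty (X × Y) := inferInstance
  have hdis : disS (closure {p}) = 0 :=
    le_antisymm ((disS_closure_le _).trans ((disS_le_iff (singleton_nonempty p)).2 (by simp)))
      zero_le
  calc dism π ≤ max (disS (closure {p})) (1 - π (closure {p})) := iInf₂_le _ isClosed_closure
    _ ≤ 1 := by simp [hdis]

end Distortion

section Gluing

variable {X Y Z : Type*} [MeasurableSpace X] [MeasurableSpace Y] [MeasurableSpace Z]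

lemma MeasureTheory.Measure.map_compProd_prodMkLeft (μ : Measure (X × Y)) [SFinite μ]
    (κ : Kernel Y Z) [IsSFiniteKernel κ] :
    (μ ⊗ₘ Kernel.prodMkLeft X κ).map (fun t => (t.1.2, t.2)) = μ.snd ⊗ₘ κ := by
  ext s hs
  rw [Measure.map_apply (by fun_prop) hs, Measure.compProd_apply (hs.preimage (by fun_prop)),
    Measure.compProd_apply hs, Measure.snd,
    lintegral_map (Kernel.measurable_kernel_prodMk_left hs) measurable_snd]
  rfl

variable [StandardBorelSpace Z] [Nonempty Z]

noncomputable def glue (π₁ : Measure (X × Y)) (π₂ : Measure (Y × Z)) [IsFiniteMeasure π₂] :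
    Measure ((X × Y) × Z) :=
  π₁ ⊗ₘ Kernel.prodMkLeft X π₂.condKernel

variable (π₁ : Measure (X × Y)) (π₂ : Measure (Y × Z)) [IsFiniteMeasure π₂]

instance [IsProbabilityMeasure π₁] : IsProbabilityMeasure (glue π₁ π₂) := by
  unfold glue; infer_instance

lemma fst_glue [SFinite π₁] : (glue π₁ π₂).fst = π₁ :=
  Measure.fst_compProd _ _

lemma map_glue_snd [SFinite π₁] (h : π₁.snd = π₂.fst) :
    (glue π₁ π₂).map (fun t => (t.1.2, t.2)) = π₂ := by
  rw [glue, Measure.map_compProd_prodMkLeft, h, Measure.disintegrate]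

lemma map_fst_map_glue [SFinite π₁] :
    ((glue π₁ π₂).map fun t => (t.1.1, t.2)).map Prod.fst = π₁.map Prod.fst := by
  conv_rhs => rw [← fst_glue π₁ π₂, Measure.fst]
  rw [Measure.map_map measurable_fst (by fun_prop), Measure.map_map measurable_fst measurable_fst]
  rfl

lemma map_snd_map_glue [SFinite π₁] (h : π₁.snd = π₂.fst) :
    ((glue π₁ π₂).map fun t => (t.1.1, t.2)).map Prod.snd = π₂.map Prod.snd := by
  conv_rhs => rw [← map_glue_snd π₁ π₂ h]
  rw [Measure.map_map measurable_snd (by fun_prop), Measure.map_map measurable_snd (by fun_prop)]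
  rfl

end Gluing

section Triangle

variable {X Y Z : Type*} [MeasurableSpace X] [MeasurableSpace Y] [MeasurableSpace Z]

lemma measure_compl_closure_comp_le [TopologicalSpace X] [TopologicalSpace Z]
    [OpensMeasurableSpace (X × Z)] (π : Measure ((X × Y) × Z)) {S₁ : Set (X × Y)}
    {S₂ : Set (Y × Z)} (hS₁ : MeasurableSet S₁) (hS₂ : MeasurableSet S₂) :
    π.map (fun t => (t.1.1, t.2)) (closure (S₁ ○ S₂))ᶜ
      ≤ π.fst S₁ᶜ + π.map (fun t => (t.1.2, t.2)) S₂ᶜ := by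
  rw [Measure.map_apply (by fun_prop) isClosed_closure.measurableSet.compl,
    Measure.fst_apply hS₁.compl, Measure.map_apply (by fun_prop) hS₂.compl]
  refine (measure_mono fun t ht => ?_).trans (measure_union_le _ _)
  by_contra h
  simp only [mem_union, Set.mem_preimage, mem_compl_iff, not_or, not_not] at h
  exact ht (subset_closure ⟨t.1.2, h.1, h.2⟩)

variable [PseudoMetricSpace X] [PseudoMetricSpace Y] [PseudoMetricSpace Z]
  [OpensMeasurableSpace (X × Y)] [OpensMeasurableSpace (Y × Z)] [OpensMeasurableSpace (X × Z)]

lemma dism_map_le_add (π : Measure ((X × Y) × Z)) [IsProbabilityMeasure π] :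
    dism (π.map fun t => (t.1.1, t.2))
      ≤ dism π.fst + dism (π.map fun t => (t.1.2, t.2)) := by
  obtain ⟨⟨⟨x, -⟩, z⟩⟩ := nonempty_of_isProbabilityMeasure π
  have : Nonempty X := ⟨x⟩
  have : Nonempty Z := ⟨z⟩
  have : IsProbabilityMeasure (π.map fun t => (t.1.1, t.2)) :=
    Measure.isProbabilityMeasure_map (by fun_prop)
  have : IsProbabilityMeasure (π.map fun t => (t.1.2, t.2)) :=
    Measure.isProbabilityMeasure_map (by fun_prop)
  refine le_iInf₂_add_iInf₂ fun S₁ (hS₁ : IsClosed S₁) S₂ (hS₂ : IsClosed S₂) => ?_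
  set T := closure (S₁ ○ S₂)
  have hmass : 1 - π.map (fun t => (t.1.1, t.2)) T
      ≤ (1 - π.fst S₁) + (1 - π.map (fun t => (t.1.2, t.2)) S₂) := by
    rw [← prob_compl_eq_one_sub isClosed_closure.measurableSet,
      ← prob_compl_eq_one_sub hS₁.measurableSet, ← prob_compl_eq_one_sub hS₂.measurableSet]
    exact measure_compl_closure_comp_le π hS₁.measurableSet hS₂.measurableSet
  rcases (S₁ ○ S₂).eq_empty_or_nonempty with hS | hS
  · calc dism (π.map fun t => (t.1.1, t.2)) ≤ 1 := dism_le_one _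
      _ = 1 - π.map (fun t => (t.1.1, t.2)) T := by simp [T, hS]
      _ ≤ _ := hmass.trans (add_le_add (le_max_right _ _) (le_max_right _ _))
  · calc dism (π.map fun t => (t.1.1, t.2))
        ≤ max (disS T) (1 - π.map (fun t => (t.1.1, t.2)) T) := iInf₂_le T isClosed_closure
      _ ≤ max (disS S₁ + disS S₂) ((1 - π.fst S₁) + (1 - π.map (fun t => (t.1.2, t.2)) S₂)) :=
        max_le_max ((disS_closure_le _).trans (disS_comp_le hS)) hmass
      _ ≤ _ := max_add_add_le_max_add_max

end Triangle

theorem stmt19_general {X : Type*} [MetricSpace X] [TopologicalSpace.SeparableSpace X]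
    [MeasurableSpace X] [BorelSpace X] {Y : Type*} [MetricSpace Y] [TopologicalSpace.SeparableSpace Y]
    [MeasurableSpace Y] [BorelSpace Y] {Z : Type*} [MetricSpace Z] [CompleteSpace Z] [TopologicalSpace.SeparableSpace Z]
    [MeasurableSpace Z] [BorelSpace Z]
    (mX : Measure X) (mY : Measure Y) (mZ : Measure Z)
    [IsProbabilityMeasure mX] :
    boxDistC mX mZ ≤ boxDistC mX mY + boxDistC mY mZ := by
  refine le_iInf₂_add_iInf₂ fun π₁ ⟨h₁X, h₁Y⟩ π₂ ⟨h₂Y, h₂Z⟩ => ?_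
  have : IsProbabilityMeasure (π₁.map Prod.fst) := h₁X ▸ inferInstance
  have : IsProbabilityMeasure π₁ := Measure.isProbabilityMeasure_of_map Prod.fst
  have : IsProbabilityMeasure (π₂.map Prod.fst) :=
    h₂Y ▸ h₁Y ▸ Measure.isProbabilityMeasure_map (by fun_prop)
  have : IsProbabilityMeasure π₂ := Measure.isProbabilityMeasure_of_map Prod.fst
  obtain ⟨-, z⟩ := (nonempty_of_isProbabilityMeasure π₂).some
  have : Nonempty Z := ⟨z⟩
  have hY : π₁.snd = π₂.fst := h₁Y.trans h₂Y.symm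
  calc boxDistC mX mZ ≤ dism ((glue π₁ π₂).map fun t => (t.1.1, t.2)) :=
        iInf₂_le _ ⟨(map_fst_map_glue π₁ π₂).trans h₁X, (map_snd_map_glue π₁ π₂ hY).trans h₂Z⟩
    _ ≤ dism (glue π₁ π₂).fst + dism ((glue π₁ π₂).map fun t => (t.1.2, t.2)) :=
        dism_map_le_add _
    _ = dism π₁ + dism π₂ := by rw [fst_glue, map_glue_snd π₁ π₂ hY]

theorem stmt19 {X : Type*} [MetricSpace X] [CompleteSpace X] [TopologicalSpace.SeparableSpace X]
    [MeasurableSpace X] [BorelSpace X] {Y : Type*} [MetricSpace Y] [CompleteSpace Y] [TopologicalSpace.SeparableSpace Y]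
    [MeasurableSpace Y] [BorelSpace Y] {Z : Type*} [MetricSpace Z] [CompleteSpace Z] [TopologicalSpace.SeparableSpace Z]
    [MeasurableSpace Z] [BorelSpace Z]
    (mX : Measure X) (mY : Measure Y) (mZ : Measure Z)
    [IsProbabilityMeasure mX] [IsProbabilityMeasure mY] [IsProbabilityMeasure mZ] :
    boxDistC mX mZ ≤ boxDistC mX mY + boxDistC mY mZ :=
  stmt19_general mX mY mZ
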